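/- Let K be a simplicial complex on vertex set [m], assume (X_i, A_i) is a pointed NDR-pair for each i = 1,…,m, and let F_i denote the homotopy fibre of the inclusion A_i → X_i. Then the sequence Z_K(CF,F) → Z_K(X,A) → ∏_{i=1}^m X_i is a homotopy fibration, where (CF,F) denotes the collection of pairs {(CF_i, F_i)}_{i=1}^m, the first map is induced by the natural maps of pairs (CF_i, F_i) → (X_i, A_i), and the second map is the inclusion of the polyhedral product into the full product. -/

import Mathlib

open scoped Topology
open ContinuousMap

noncomputable section

/-- The map on generalized loops induced by a continuous map. -/
def GenLoop.push {X Y : Type} [TopologicalSpace X] [TopologicalSpace Y] {N : Type} (f : C(X, Y))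
    {x : X} (p : GenLoop N X x) : GenLoop N Y (f x) :=
  ⟨f.comp p.1, fun t ht => by simp [p.2 t ht]⟩

/-- The map induced by a continuous map on homotopy groups (as pointed sets). -/
def piMap {X Y : Type} [TopologicalSpace X] [TopologicalSpace Y] (f : C(X, Y)) (N : Type) (x : X) :
    HomotopyGroup N X x → HomotopyGroup N Y (f x) :=
  Quotient.map (GenLoop.push f) (fun _ _ h => Nonempty.map (fun H => H.compContinuousMap f) h)

/-- A weakly contractible space: all homotopy groups (including `π₀`) are trivial. -/
def WeaklyContractible (X : Type) [TopologicalSpace X] : Prop :=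
  Nonempty X ∧ ∀ (x : X) (n : ℕ), Subsingleton (HomotopyGroup (Fin n) X x)

/-- A weak homotopy equivalence: induces bijections on all homotopy groups at all basepoints
(including `π₀`). -/
def IsWeakHomotopyEquiv {X Y : Type} [TopologicalSpace X] [TopologicalSpace Y]
    (f : C(X, Y)) : Prop :=
  (Nonempty Y → Nonempty X) ∧ ∀ (x : X) (n : ℕ), Function.Bijective (piMap f (Fin n) x)

/-- `X` is a homotopy retract of `Y`. -/
def HomotopyRetract (X Y : Type) [TopologicalSpace X] [TopologicalSpace Y] : Prop :=
  ∃ (i : C(X, Y)) (r : C(Y, X)), (r.comp i).Homotopic (ContinuousMap.id X)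

/-- The underlying map of a homotopy equivalence. -/
def IsHEquivMap {X Y : Type} [TopologicalSpace X] [TopologicalSpace Y] (f : C(X, Y)) : Prop :=
  ∃ g : C(Y, X), (g.comp f).Homotopic (ContinuousMap.id X) ∧
    (f.comp g).Homotopic (ContinuousMap.id Y)

/-- The homotopy fibre of `f` over `b`. -/
def HFiber {E B : Type} [TopologicalSpace E] [TopologicalSpace B] (f : C(E, B)) (b : B) : Type :=
  { z : E × C(unitInterval, B) // z.2 0 = f z.1 ∧ z.2 1 = b }

instance {E B : Type} [TopologicalSpace E] [TopologicalSpace B] (f : C(E, B)) (b : B) :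
    TopologicalSpace (HFiber f b) :=
  instTopologicalSpaceSubtype

/-- The projection from the homotopy fibre to the total space. -/
def HFiber.proj {E B : Type} [TopologicalSpace E] [TopologicalSpace B] (f : C(E, B)) (b : B) :
    C(HFiber f b, E) :=
  ⟨fun z => z.1.1, by fun_prop⟩

/-- Comparison map from `F` to the homotopy fibre of `p`, given a null-homotopy of `p ∘ i`. -/
def hfibCompare {F E B : Type} [TopologicalSpace F] [TopologicalSpace E] [TopologicalSpace B]
    (i : C(F, E)) (p : C(E, B)) (b : B)
    (H : ContinuousMap.Homotopy (p.comp i) (ContinuousMap.const F b)) : C(F, HFiber p b) where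
  toFun z := ⟨(i z, (H.toContinuousMap.comp ContinuousMap.prodSwap).curry z),
    by simp, by simp⟩
  continuous_toFun := by
    apply Continuous.subtype_mk
    exact i.continuous.prodMk ((H.toContinuousMap.comp ContinuousMap.prodSwap).curry).continuous

/-- A sequence `F → E → B` is a homotopy fibration if `p ∘ i` is null-homotopic via a homotopy
for which the induced comparison map from `F` to the homotopy fibre of `p` is a homotopy
equivalence. -/
def IsHomotopyFibration {F E B : Type} [TopologicalSpace F] [TopologicalSpace E]
    [TopologicalSpace B] (i : C(F, E)) (p : C(E, B)) : Prop :=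
  ∃ (b : B) (H : ContinuousMap.Homotopy (p.comp i) (ContinuousMap.const F b)),
    IsHEquivMap (hfibCompare i p b H)


open CategoryTheory


/-- The singular chain complex functor with coefficients in a commutative ring `R`. -/
def singularChains (R : Type) [CommRing R] : TopCat.{0} ⥤ ChainComplex (ModuleCat.{0} R) ℕ :=
  TopCat.toSSet ⋙ ((SimplicialObject.whiskering _ _).obj (ModuleCat.free R)) ⋙
    AlgebraicTopology.alternatingFaceMapComplex _

/-- Singular homology of a space with coefficients in `R`. -/
def SH (R : Type) [CommRing R] (n : ℕ) (X : Type) [TopologicalSpace X] : ModuleCat R :=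
  ((singularChains R).obj (TopCat.of X)).homology n

/-- The induced map on singular homology. -/
def SHmap (R : Type) [CommRing R] (n : ℕ) {X Y : Type} [TopologicalSpace X] [TopologicalSpace Y]
    (f : C(X, Y)) : SH R n X ⟶ SH R n Y :=
  HomologicalComplex.homologyMap ((singularChains R).map (TopCat.ofHom f)) n

/-- An abelian group is a finitely generated `R`-module (for some compatible `R`-module
structure). -/
def IsFGModuleOver (R : Type) [CommRing R] (M : Type) [AddCommGroup M] : Prop :=
  ∃ (N : Type) (_ : AddCommGroup N) (_ : Module R N),
    Module.Finite R N ∧ Nonempty (M ≃+ N)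

/-- A (multiplicative) group is, up to isomorphism, a finitely generated `R`-module. -/
def IsFGMulOver (R : Type) [CommRing R] (G : Type) [Group G] : Prop :=
  ∃ (N : Type) (_ : AddCommGroup N) (_ : Module R N),
    Module.Finite R N ∧ Nonempty (G ≃* Multiplicative N)

/-- A space has finite type over `R`: each reduced integral homology group is a finitely
generated `R`-module.  (For connected spaces and `R = ℤ` this is the usual notion of
finite type.) -/
def FiniteTypeOver (R : Type) [CommRing R] (X : Type) [TopologicalSpace X] : Prop :=
  ∀ n : ℕ, 1 ≤ n → IsFGModuleOver R (SH ℤ n X)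

/-- The ideal `(p) ⊆ ℤ`. -/
def pIdeal (p : ℕ) : Ideal ℤ := Ideal.span {(p : ℤ)}

instance pIdeal.isPrime (p : ℕ) [hp : Fact p.Prime] : (pIdeal p).IsPrime := by
  rw [pIdeal, Ideal.span_singleton_prime (by exact_mod_cast hp.out.ne_zero)]
  exact_mod_cast Nat.prime_iff_prime_int.mp hp.out

/-- The integers localized at the prime `p`. -/
abbrev Zloc (p : ℕ) [Fact p.Prime] : Type := Localization.AtPrime (pIdeal p)

/-- A nonempty path-connected space all of whose homology with coefficients in `R` vanishes
in positive degrees, i.e. whose reduced `R`-homology vanishes. -/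
def AcyclicOver (R : Type) [CommRing R] (X : Type) [TopologicalSpace X] : Prop :=
  Nonempty X ∧ PathConnectedSpace X ∧ ∀ n : ℕ, 1 ≤ n → Subsingleton (SH R n X)

/-- An acyclic space: reduced integral homology vanishes. -/
def AcyclicSpace (X : Type) [TopologicalSpace X] : Prop := AcyclicOver ℤ X

/-- A homology rational sphere: a connected space with `H̃⋆(X;ℤ) ≅ ℚ`, concentrated in a
single (positive) degree. -/
def IsHomologyRationalSphere (X : Type) [TopologicalSpace X] : Prop :=
  Nonempty X ∧ PathConnectedSpace X ∧ ∃ d : ℕ, 1 ≤ d ∧ Nonempty ((SH ℤ d X) ≃+ ℚ) ∧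
    ∀ n : ℕ, 1 ≤ n → n ≠ d → Subsingleton (SH ℤ n X)



/-! ### Local spaces, GEMs and generalised Postnikov towers -/

/-- `S`-local space: the `k`-th power map on all homotopy groups is bijective
for every `k` with `S k`. -/
def SLocalSpace (S : ℕ → Prop) (X : Type) [TopologicalSpace X] : Prop :=
  ∀ (x : X) (n k : ℕ), S k →
    Function.Bijective (fun g : HomotopyGroup (Fin (n + 1)) X x => g ^ k)

/-- The family of exponents inverted in `p`-local spaces. -/
def pInv (p : ℕ) : ℕ → Prop := fun k => k ≠ 0 ∧ ¬ (p ∣ k)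

/-- The family of exponents inverted in rational spaces. -/
def ratInv : ℕ → Prop := fun k => k ≠ 0

/-- No exponents inverted (integral setting). -/
def intInv : ℕ → Prop := fun _ => False

/-- Homotopy groups are finitely generated `R`-modules in every degree. -/
def PiFiniteOver (R : Type) [CommRing R] (X : Type) [TopologicalSpace X] : Prop :=
  ∀ (x : X) (n : ℕ), IsFGMulOver R (HomotopyGroup (Fin (n + 1)) X x)

/-- An Eilenberg-MacLane space `K(A, n+1)` for some abelian group `A`. -/
def IsEMSpace (Y : Type) [TopologicalSpace Y] (n : ℕ) : Prop :=
  Nonempty Y ∧ PathConnectedSpace Y ∧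
    (∀ (y : Y) (k : ℕ), k ≠ n + 1 → Subsingleton (HomotopyGroup (Fin k) Y y)) ∧
    (∀ (y : Y) (a b : HomotopyGroup (Fin (n + 1)) Y y), a * b = b * a)

/-- A generalised Eilenberg-MacLane space (GEM): a space homotopy equivalent to a (possibly
infinite) product of Eilenberg-MacLane spaces of abelian groups. -/
def IsGEM (Z : Type) [TopologicalSpace Z] : Prop :=
  ∃ (ι : Type) (Y : ι → Type) (_ : ∀ i, TopologicalSpace (Y i)) (n : ι → ℕ),
    (∀ i, IsEMSpace (Y i) (n i)) ∧ Nonempty (ContinuousMap.HomotopyEquiv Z (∀ i, Y i))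

/-- One step of a generalised Postnikov tower: `q : Z' → Z` is, up to homotopy, the fibre
inclusion of a homotopy fibration `Z' → Z → K` with `K` a `c`-connected GEM which is `S`-local,
and of finite type over `R` when `ft = true`. -/
def GPTStep (R : Type) [CommRing R] (S : ℕ → Prop) (ft : Bool) (c : ℕ)
    {Z' Z : Type} [TopologicalSpace Z'] [TopologicalSpace Z] (q : C(Z', Z)) : Prop :=
  ∃ (K : Type) (_ : TopologicalSpace K) (k : C(Z, K)),
    IsGEM K ∧ (∀ (y : K) (j : ℕ), j ≤ c → Subsingleton (HomotopyGroup (Fin j) K y)) ∧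
    SLocalSpace S K ∧ (ft = true → PiFiniteOver R K) ∧ IsHomotopyFibration q k

/-- `X` admits a generalised Postnikov tower of length `l` whose principal fibrations have as
fibres `c`-connected GEMs which are `S`-local, and of finite type over `R` when `ft = true`.
(`c = 1` gives the usual simply-connected GEM condition.) -/
def HasGPT (R : Type) [CommRing R] (S : ℕ → Prop) (ft : Bool) (c : ℕ)
    (X : Type) [TopologicalSpace X] (l : ℕ) : Prop :=
  ∃ (Z : ℕ → Type) (_ : ∀ n, TopologicalSpace (Z n)) (q : ∀ n, C(Z (n + 1), Z n)),
    WeaklyContractible (Z 0) ∧ (∀ n < l, GPTStep R S ft c (q n)) ∧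
    ∃ f : C(X, Z l), IsWeakHomotopyEquiv f

/-- A universal cover: a covering map with simply connected total space. -/
def IsUniversalCover {X' X : Type} [TopologicalSpace X'] [TopologicalSpace X]
    (q : C(X', X)) : Prop :=
  IsCoveringMap (q : X' → X) ∧ SimplyConnectedSpace X'

/-! ### The classes `P`, `F`, `K` and their local analogues -/

/-- The class `P` (in its `(R, S, loc)`-parametrised form): the minimal class, closed under
homotopy retracts, of connected spaces (`S`-local and of finite type over `R` when
`loc = true`) whose universal covers admit finite type (over `R`) `S`-local generalised
Postnikov towers of finite length. -/
def ClassPGen (R : Type) [CommRing R] (S : ℕ → Prop) (loc : Bool)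
    (X : Type) [TopologicalSpace X] : Prop :=
  ConnectedSpace X ∧ (loc = true → SLocalSpace S X ∧ FiniteTypeOver R X) ∧
  ∃ (Y : Type) (_ : TopologicalSpace Y), ConnectedSpace Y ∧
    (loc = true → SLocalSpace S Y ∧ FiniteTypeOver R Y) ∧
    (∃ (Y' : Type) (_ : TopologicalSpace Y') (c : C(Y', Y)), IsUniversalCover c ∧
      ∃ l : ℕ, HasGPT R S true 1 Y' l) ∧
    HomotopyRetract X Y

/-- The class `𝐏` of the paper. -/
def ClassP (X : Type) [TopologicalSpace X] : Prop := ClassPGen ℤ intInv false X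

/-- The class `𝐏ₚ` of the paper. -/
def ClassPp (p : ℕ) [Fact p.Prime] (X : Type) [TopologicalSpace X] : Prop :=
  ClassPGen (Zloc p) (pInv p) true X

/-- The class `𝐏₀` of the paper. -/
def ClassP0 (X : Type) [TopologicalSpace X] : Prop := ClassPGen ℚ ratInv true X

/-- The class `F` (parametrised): connected spaces whose universal covers are of finite type
(over `R`) and have non-trivial homotopy groups in only finitely many dimensions. -/
def ClassFGen (R : Type) [CommRing R] (S : ℕ → Prop) (loc : Bool)
    (X : Type) [TopologicalSpace X] : Prop :=
  ConnectedSpace X ∧ (loc = true → SLocalSpace S X ∧ FiniteTypeOver R X) ∧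
  ∃ (X' : Type) (_ : TopologicalSpace X') (c : C(X', X)), IsUniversalCover c ∧
    FiniteTypeOver R X' ∧ (loc = true → SLocalSpace S X') ∧
    ∃ N : ℕ, ∀ n ≥ N, ∀ x' : X', Subsingleton (HomotopyGroup (Fin (n + 1)) X' x')

/-- The class `𝐅` of the paper. -/
def ClassF (X : Type) [TopologicalSpace X] : Prop := ClassFGen ℤ intInv false X

/-- The class `𝐅ₚ` of the paper. -/
def ClassFp (p : ℕ) [Fact p.Prime] (X : Type) [TopologicalSpace X] : Prop :=
  ClassFGen (Zloc p) (pInv p) true X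

/-- The class `𝐅₀` of the paper. -/
def ClassF0 (X : Type) [TopologicalSpace X] : Prop := ClassFGen ℚ ratInv true X

/-- `X` admits a classical Postnikov tower (consisting of stages `P n`, comparison maps
`f n : X → P n`, structure maps `q n : P (n+1) → P n` and `k`-invariants
`k n : P n → L n` with `L n` an Eilenberg-MacLane space of dimension `n + 2`) in which all but
finitely many of the `k`-invariants are trivial (null-homotopic). -/
def HasFinitelyManyKInvariants (X : Type) [TopologicalSpace X] : Prop :=
  ∃ (P : ℕ → Type) (_ : ∀ n, TopologicalSpace (P n))
    (f : ∀ n, C(X, P n)) (q : ∀ n, C(P (n + 1), P n))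
    (L : ℕ → Type) (_ : ∀ n, TopologicalSpace (L n)) (k : ∀ n, C(P n, L n)),
    WeaklyContractible (P 0) ∧
    (∀ n, (f n).Homotopic ((q n).comp (f (n + 1)))) ∧
    (∀ (n : ℕ) (x : X) (j : ℕ), j ≤ n → Function.Bijective (piMap (f n) (Fin j) x)) ∧
    (∀ (n : ℕ) (y : P n) (j : ℕ), j > n → Subsingleton (HomotopyGroup (Fin j) (P n) y)) ∧
    (∀ n, IsEMSpace (L n) (n + 1)) ∧
    (∀ n, IsHomotopyFibration (q n) (k n)) ∧
    Set.Finite {n : ℕ | ¬ ∃ y : L n, (k n).Homotopic (ContinuousMap.const (P n) y)}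

/-- The class `K` (parametrised): connected spaces whose universal covers are of finite type
(over `R`) and have only finitely many non-trivial `k`-invariants. -/
def ClassKGen (R : Type) [CommRing R] (S : ℕ → Prop) (loc : Bool)
    (X : Type) [TopologicalSpace X] : Prop :=
  ConnectedSpace X ∧ (loc = true → SLocalSpace S X ∧ FiniteTypeOver R X) ∧
  ∃ (X' : Type) (_ : TopologicalSpace X') (c : C(X', X)), IsUniversalCover c ∧
    FiniteTypeOver R X' ∧ (loc = true → SLocalSpace S X') ∧
    HasFinitelyManyKInvariants X'

/-- The class `𝐊` of the paper. -/
def ClassK (X : Type) [TopologicalSpace X] : Prop := ClassKGen ℤ intInv false X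

/-- The class `𝐊ₚ` of the paper. -/
def ClassKp (p : ℕ) [Fact p.Prime] (X : Type) [TopologicalSpace X] : Prop :=
  ClassKGen (Zloc p) (pInv p) true X

/-- The class `𝐊₀` of the paper. -/
def ClassK0 (X : Type) [TopologicalSpace X] : Prop := ClassKGen ℚ ratInv true X

/-- The class `𝐄₀` of the paper: connected spaces whose universal cover is rational elliptic,
i.e. a rational space with finite dimensional rational homotopy and rational homology. -/
def ClassE0 (X : Type) [TopologicalSpace X] : Prop :=
  ConnectedSpace X ∧
  ∃ (X' : Type) (_ : TopologicalSpace X') (c : C(X', X)), IsUniversalCover c ∧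
    SLocalSpace ratInv X' ∧
    (∀ (x' : X') (n : ℕ), IsFGMulOver ℚ (HomotopyGroup (Fin (n + 1)) X' x')) ∧
    (∃ N : ℕ, ∀ n ≥ N, ∀ x' : X', Subsingleton (HomotopyGroup (Fin (n + 1)) X' x')) ∧
    (∀ n : ℕ, 1 ≤ n → IsFGModuleOver ℚ (SH ℚ n X')) ∧
    (∃ N : ℕ, ∀ n ≥ N, Subsingleton (SH ℚ n X'))

/-! ### Asphericity and connectivity -/

/-- An aspherical (`K(π,1)`) space. -/
def IsAspherical (X : Type) [TopologicalSpace X] : Prop :=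
  Nonempty X ∧ PathConnectedSpace X ∧
    ∀ (x : X) (n : ℕ), 2 ≤ n → Subsingleton (HomotopyGroup (Fin n) X x)

/-- `X` is a `K(G, 1)`. -/
def IsKpi1Of (X : Type) [TopologicalSpace X] (G : Type) [Group G] : Prop :=
  IsAspherical X ∧ ∃ x : X, Nonempty (FundamentalGroup X x ≃* G)

/-- An `r`-connected space: homotopy groups vanish in degrees `≤ r`. -/
def IsNConnected (r : ℕ) (X : Type) [TopologicalSpace X] : Prop :=
  Nonempty X ∧ ∀ (x : X) (k : ℕ), k ≤ r → Subsingleton (HomotopyGroup (Fin k) X x)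


/-! ### Cones, suspensions, smash products and pushouts -/

/-- The (unreduced) cone on `X`: `X × I` with `X × {1}` collapsed to a point. -/
def TopCone (X : Type) [TopologicalSpace X] : Type :=
  Quot (fun a b : X × unitInterval => a.2 = 1 ∧ b.2 = 1)

instance (X : Type) [TopologicalSpace X] : TopologicalSpace (TopCone X) :=
  inferInstanceAs (TopologicalSpace (Quot _))

/-- The inclusion of `X` into the base of the cone. -/
def coneIncl (X : Type) [TopologicalSpace X] : C(X, TopCone X) :=
  ⟨fun x => Quot.mk _ (x, 0), continuous_quot_mk.comp (by fun_prop)⟩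

/-- The map of cones induced by a continuous map. -/
def coneMap {X Y : Type} [TopologicalSpace X] [TopologicalSpace Y] (f : C(X, Y)) :
    C(TopCone X, TopCone Y) :=
  ⟨Quot.lift (fun a => Quot.mk _ (f a.1, a.2))
      (fun _ _ h => Quot.sound ⟨h.1, h.2⟩),
    continuous_quot_lift _ (continuous_quot_mk.comp (by fun_prop))⟩

theorem coneMap_mapsTo {X Y : Type} [TopologicalSpace X] [TopologicalSpace Y] (f : C(X, Y)) :
    Set.MapsTo (coneMap f) (Set.range (coneIncl X)) (Set.range (coneIncl Y)) := by
  rintro _ ⟨x, rfl⟩; exact ⟨f x, rfl⟩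

/-- The reduced suspension of a pointed space: `X × I` with `X × {0} ∪ X × {1} ∪ {x₀} × I`
collapsed to a point. -/
def RSusp (X : Type) [TopologicalSpace X] (x0 : X) : Type :=
  Quot (fun a b : X × unitInterval =>
    (a.2 = 0 ∨ a.2 = 1 ∨ a.1 = x0) ∧ (b.2 = 0 ∨ b.2 = 1 ∨ b.1 = x0))

instance (X : Type) [TopologicalSpace X] (x0 : X) : TopologicalSpace (RSusp X x0) :=
  inferInstanceAs (TopologicalSpace (Quot _))

/-- The basepoint of the reduced suspension. -/
def RSusp.pt (X : Type) [TopologicalSpace X] (x0 : X) : RSusp X x0 :=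
  Quot.mk _ (x0, 0)

/-- The map of reduced suspensions induced by a pointed continuous map. -/
def rsuspMap {X Y : Type} [TopologicalSpace X] [TopologicalSpace Y] {x0 : X} {y0 : Y}
    (f : C(X, Y)) (hf : f x0 = y0) : C(RSusp X x0, RSusp Y y0) :=
  ⟨Quot.lift (fun a => Quot.mk _ (f a.1, a.2))
      (by
        rintro a b ⟨ha, hb⟩
        refine Quot.sound ⟨?_, ?_⟩ <;>
          [rcases ha with h | h | h; rcases hb with h | h | h] <;>
          simp [h, hf]),
    continuous_quot_lift _ (continuous_quot_mk.comp (by fun_prop))⟩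

/-- The half-smash `B ⋊ X = (B × X)/(B × {x₀})`. -/
def HalfSmash (B X : Type) [TopologicalSpace B] [TopologicalSpace X] (x0 : X) : Type :=
  Quot (fun u v : B × X => u.2 = x0 ∧ v.2 = x0)

instance (B X : Type) [TopologicalSpace B] [TopologicalSpace X] (x0 : X) :
    TopologicalSpace (HalfSmash B X x0) :=
  inferInstanceAs (TopologicalSpace (Quot _))

/-- The smash product `A ∧ X = (A × X)/(A × {x₀} ∪ {a₀} × X)`. -/
def Smash (A X : Type) [TopologicalSpace A] [TopologicalSpace X] (a0 : A) (x0 : X) : Type :=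
  Quot (fun u v : A × X => (u.1 = a0 ∨ u.2 = x0) ∧ (v.1 = a0 ∨ v.2 = x0))

instance (A X : Type) [TopologicalSpace A] [TopologicalSpace X] (a0 : A) (x0 : X) :
    TopologicalSpace (Smash A X a0 x0) :=
  inferInstanceAs (TopologicalSpace (Quot _))

/-- The basepoint of a smash product. -/
def Smash.pt {A X : Type} [TopologicalSpace A] [TopologicalSpace X] (a0 : A) (x0 : X) :
    Smash A X a0 x0 :=
  Quot.mk _ (a0, x0)

/-- The wedge `U ∨ V`. -/
def Wedge (U V : Type) [TopologicalSpace U] [TopologicalSpace V] (u0 : U) (v0 : V) : Type :=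
  Quot (fun s t : U ⊕ V => (s = Sum.inl u0 ∨ s = Sum.inr v0) ∧ (t = Sum.inl u0 ∨ t = Sum.inr v0))

instance (U V : Type) [TopologicalSpace U] [TopologicalSpace V] (u0 : U) (v0 : V) :
    TopologicalSpace (Wedge U V u0 v0) :=
  inferInstanceAs (TopologicalSpace (Quot _))

/-- The relation defining the pushout of `B ←f− A −g→ X`. -/
def PushoutRel {A B X : Type} (f : A → B) (g : A → X) (u v : B ⊕ X) : Prop :=
  ∃ a : A, u = Sum.inl (f a) ∧ v = Sum.inr (g a)

/-- The (strict) topological pushout of `B ←f− A −g→ X`. -/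
def TopPushout {A B X : Type} [TopologicalSpace A] [TopologicalSpace B] [TopologicalSpace X]
    (f : C(A, B)) (g : C(A, X)) : Type :=
  Quot (PushoutRel f g)

instance {A B X : Type} [TopologicalSpace A] [TopologicalSpace B] [TopologicalSpace X]
    (f : C(A, B)) (g : C(A, X)) : TopologicalSpace (TopPushout f g) :=
  inferInstanceAs (TopologicalSpace (Quot _))

/-! ### Simplicial complexes and polyhedral products -/

/-- An (abstract) simplicial complex on the vertex set `[m] = {0, …, m-1}`. -/
structure SimplicialComplexOn (m : ℕ) where
  faces : Set (Finset (Fin m))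
  empty_mem : ∅ ∈ faces
  down_closed : ∀ {σ τ : Finset (Fin m)}, σ ∈ faces → τ ⊆ σ → τ ∈ faces
  vertex_mem : ∀ i : Fin m, {i} ∈ faces

namespace SimplicialComplexOn

/-- `K` is the full simplex on its vertex set. -/
def IsSimplex {m : ℕ} (K : SimplicialComplexOn m) : Prop := K.faces = Set.univ

/-- A minimal non-face of `K`. -/
def IsMinNonFace {m : ℕ} (K : SimplicialComplexOn m) (M : Finset (Fin m)) : Prop :=
  2 ≤ M.card ∧ M ∉ K.faces ∧ ∀ τ : Finset (Fin m), τ ⊂ M → τ ∈ K.faces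

/-- A flag complex: all minimal non-faces have cardinality two. -/
def IsFlag {m : ℕ} (K : SimplicialComplexOn m) : Prop :=
  ∀ M : Finset (Fin m), K.IsMinNonFace M → M.card = 2

/-- The minimal non-faces are mutually disjoint. -/
def MinNonFacesDisjoint {m : ℕ} (K : SimplicialComplexOn m) : Prop :=
  ∀ M M' : Finset (Fin m), K.IsMinNonFace M → K.IsMinNonFace M' → M ≠ M' →
    Disjoint M M'

end SimplicialComplexOn

/-- The polyhedral product `Z_K(X, A)` of the family of pairs `(X i, A i)`, as a subset of
`∏ i, X i`. -/
def polyProd {m : ℕ} (K : SimplicialComplexOn m) (X : Fin m → Type)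
    [∀ i, TopologicalSpace (X i)] (A : ∀ i, Set (X i)) : Set (∀ i, X i) :=
  {z | ∃ σ ∈ K.faces, ∀ i, i ∉ σ → z i ∈ A i}

/-- The continuous inclusion of a subspace. -/
def inclCM {X : Type} [TopologicalSpace X] (A : Set X) : C(A, X) :=
  ⟨Subtype.val, continuous_subtype_val⟩

/-- The map of polyhedral products induced by a family of maps of pairs. -/
def polyProdMap {m : ℕ} (K : SimplicialComplexOn m) {X Y : Fin m → Type}
    [∀ i, TopologicalSpace (X i)] [∀ i, TopologicalSpace (Y i)]
    {A : ∀ i, Set (X i)} {B : ∀ i, Set (Y i)} (f : ∀ i, C(X i, Y i))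
    (hf : ∀ i, Set.MapsTo (f i) (A i) (B i)) :
    C(polyProd K X A, polyProd K Y B) :=
  have hmem : ∀ z : polyProd K X A, (fun i => f i (z.1 i)) ∈ polyProd K Y B := fun z => by
    obtain ⟨σ, hσ, hz⟩ := z.2
    exact ⟨σ, hσ, fun i hi => hf i (hz i hi)⟩
  ⟨fun z => ⟨fun i => f i (z.1 i), hmem z⟩,
    Continuous.subtype_mk (continuous_pi fun i =>
      (f i).continuous.comp ((continuous_apply i).comp continuous_subtype_val)) hmem⟩

/-- The inclusion of the polyhedral product into the ambient product. -/
def polyProdProj {m : ℕ} (K : SimplicialComplexOn m) (X : Fin m → Type)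
    [∀ i, TopologicalSpace (X i)] (A : ∀ i, Set (X i)) :
    C(polyProd K X A, ∀ i, X i) :=
  ⟨Subtype.val, continuous_subtype_val⟩

/-! ### Cofibrations -/

/-- A map is a cofibration when it has the homotopy extension property. -/
def IsCofibration {A X : Type} [TopologicalSpace A] [TopologicalSpace X] (j : C(A, X)) : Prop :=
  ∀ (Y : Type) (_ : TopologicalSpace Y) (g : C(X, Y)) (h : C(unitInterval × A, Y)),
    (∀ a, h (0, a) = g (j a)) →
    ∃ H : C(unitInterval × X, Y), (∀ x, H (0, x) = g x) ∧ ∀ t a, H (t, j a) = h (t, a)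

/-- `(X, A)` is an NDR-pair: the inclusion `A → X` is a cofibration. -/
def IsNDRPair {X : Type} [TopologicalSpace X] (A : Set X) : Prop :=
  IsCofibration (inclCM A)


/-! ### The evaluation map from the cone on a homotopy fibre -/

/-- The canonical evaluation map `C(hofib(A → X)) → X`, sending `((a, γ), t)` to `γ t`. -/
def coneFibEval {X : Type} [TopologicalSpace X] (A : Set X) (x0 : X) :
    C(TopCone (HFiber (inclCM A) x0), X) :=
  ⟨Quot.lift (fun w : HFiber (inclCM A) x0 × unitInterval => w.1.1.2 w.2)
      (fun w w' h => by
        rw [h.1, h.2, w.1.2.2, w'.1.2.2]),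
    continuous_quot_lift _ (by
      have h1 : Continuous fun w : HFiber (inclCM A) x0 × unitInterval =>
          ((w.1.1.2, w.2) : C(unitInterval, X) × unitInterval) :=
        ((continuous_snd.comp (continuous_subtype_val.comp continuous_fst)).prodMk
          continuous_snd)
      exact ContinuousEval.continuous_eval.comp h1)⟩

theorem coneFibEval_mapsTo {X : Type} [TopologicalSpace X] (A : Set X) (x0 : X) :
    Set.MapsTo (coneFibEval A x0) (Set.range (coneIncl (HFiber (inclCM A) x0))) A := by
  rintro _ ⟨w, rfl⟩
  show w.1.2 0 ∈ A
  rw [w.2.1]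
  exact w.1.1.2

/-! ### Lusternik-Schnirelmann category and localizations -/

/-- `cat X ≤ n`: `X` is covered by `n + 1` open sets, each of which is contractible in `X`. -/
def LSCatLE (X : Type) [TopologicalSpace X] (n : ℕ) : Prop :=
  ∃ U : Fin (n + 1) → Set X, (∀ i, IsOpen (U i)) ∧ (⋃ i, U i) = Set.univ ∧
    ∀ i, ∃ x0 : X, (inclCM (U i)).Homotopic (ContinuousMap.const _ x0)

/-- `f : X → Y` is an `S`-localization (with coefficients `R`): `Y` is `S`-local and `f`
induces an isomorphism on homology with coefficients in `R`. -/
def IsLocalizationOver (R : Type) [CommRing R] (S : ℕ → Prop) {X Y : Type}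
    [TopologicalSpace X] [TopologicalSpace Y] (f : C(X, Y)) : Prop :=
  SLocalSpace S Y ∧ ∀ n : ℕ, Function.Bijective (SHmap R n f)

/-! ### The induced homomorphism on fundamental groups, and the plus construction -/

/-- The homomorphism induced by a continuous map on fundamental groups. -/
def pi1Hom {X Y : Type} [TopologicalSpace X] [TopologicalSpace Y] (f : C(X, Y)) (x : X) :
    FundamentalGroup X x →* FundamentalGroup Y (f x) :=
  CategoryTheory.Functor.mapEnd
    (X := FundamentalGroupoid.mk x)
    (FundamentalGroupoid.fundamentalGroupoidFunctor.map
      (TopCat.ofHom f))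

/-- `l : X → Y` is a Quillen plus construction with respect to the perfect normal subgroup
`P ≤ π₁(X, x)`: it kills exactly `P` on fundamental groups and its homotopy fibre is acyclic
(equivalently, it is a homology isomorphism for all local coefficient systems on `Y`). -/
def IsPlusConstructionWrt {X Y : Type} [TopologicalSpace X] [TopologicalSpace Y]
    (l : C(X, Y)) (x : X) (P : Subgroup (FundamentalGroup X x)) : Prop :=
  P.Normal ∧ ⁅P, P⁆ = P ∧
  Function.Surjective (pi1Hom l x) ∧ (pi1Hom l x).ker = P ∧
  AcyclicSpace (HFiber l (l x))

/-! ### Graph products of groups -/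

/-- The commutation relations defining a graph product. -/
def graphProdRels {m : ℕ} (Γ : SimpleGraph (Fin m)) (G : Fin m → Type)
    [∀ i, Group (G i)] : Set (Monoid.CoprodI G) :=
  {x | ∃ (i j : Fin m) (g : G i) (h : G j), Γ.Adj i j ∧
    x = Monoid.CoprodI.of g * Monoid.CoprodI.of h *
      (Monoid.CoprodI.of g)⁻¹ * (Monoid.CoprodI.of h)⁻¹}

/-- The graph product of the groups `G i` over the simple graph `Γ`. -/
def GraphProduct {m : ℕ} (Γ : SimpleGraph (Fin m)) (G : Fin m → Type)
    [∀ i, Group (G i)] : Type :=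
  Monoid.CoprodI G ⧸ Subgroup.normalClosure (graphProdRels Γ G)

instance {m : ℕ} (Γ : SimpleGraph (Fin m)) (G : Fin m → Type) [∀ i, Group (G i)] :
    Group (GraphProduct Γ G) :=
  inferInstanceAs (Group (Monoid.CoprodI G ⧸ Subgroup.normalClosure (graphProdRels Γ G)))

theorem graphProdRels_le_ker {m : ℕ} (Γ : SimpleGraph (Fin m)) (G : Fin m → Type)
    [∀ i, Group (G i)] :
    Subgroup.normalClosure (graphProdRels Γ G) ≤
      (Monoid.CoprodI.lift fun i => MonoidHom.mulSingle G i).ker := by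
  apply Subgroup.normalClosure_le_normal
  rintro x ⟨i, j, g, h, hadj, rfl⟩
  have hc : Commute (MonoidHom.mulSingle G i g) (MonoidHom.mulSingle G j h) :=
    Pi.mulSingle_commute hadj.ne g h
  simp only [SetLike.mem_coe, MonoidHom.mem_ker, map_mul, map_inv, Monoid.CoprodI.lift_of]
  rw [hc.eq]
  group

/-- The canonical homomorphism from the graph product to the direct product. -/
def GraphProduct.toPi {m : ℕ} (Γ : SimpleGraph (Fin m)) (G : Fin m → Type)
    [∀ i, Group (G i)] : GraphProduct Γ G →* ∀ i, G i :=
  QuotientGroup.lift _ (Monoid.CoprodI.lift fun i => MonoidHom.mulSingle G i)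
    (graphProdRels_le_ker Γ G)

/-- The graph product kernel `K_Γ(G)`: the kernel of the canonical homomorphism
`G^Γ → ∏ i, G i`. -/
def GraphProductKernel {m : ℕ} (Γ : SimpleGraph (Fin m)) (G : Fin m → Type)
    [∀ i, Group (G i)] : Subgroup (GraphProduct Γ G) :=
  (GraphProduct.toPi Γ G).ker

/-- The flag complex of a simple graph. -/
def flagComplex {m : ℕ} (Γ : SimpleGraph (Fin m)) : SimplicialComplexOn m where
  faces := {σ | ∀ i ∈ σ, ∀ j ∈ σ, i ≠ j → Γ.Adj i j}
  empty_mem := by simp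
  down_closed := fun hσ hτ i hi j hj hij => hσ i (hτ hi) j (hτ hj) hij
  vertex_mem := by
    intro i j hj k hk hjk
    simp only [Finset.mem_singleton] at hj hk
    exact absurd (hj.trans hk.symm) hjk


/-- A rational sphere `S^n_{(0)}` (`n ≥ 2`): a simply connected rational space whose reduced
integral homology is a single `ℚ` in degree `n`. -/
def IsRationalSphere (Y : Type) [TopologicalSpace Y] (n : ℕ) : Prop :=
  SimplyConnectedSpace Y ∧ SLocalSpace ratInv Y ∧ 2 ≤ n ∧
    Nonempty ((SH ℤ n Y) ≃+ ℚ) ∧ ∀ k : ℕ, 1 ≤ k → k ≠ n → Subsingleton (SH ℤ k Y)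

end

/-! A path in `∏ i, X i` is a family of coordinate paths, so the homotopy fibre of
`Z_K(X, A) → ∏ i, X i` over `x0` is the polyhedral product `Z_K(P, P_A)` of the pairs formed by
the paths `P i` ending at `x0 i` and those, `P_A i`, that start in `A i`. Restricting the path of a
point of `F i` to its final segments gives a map of pairs `(CF i, F i) → (P i, P_A i)`, and it
suffices to show that this is a homotopy equivalence of pairs, because homotopies of pairs assemble
over `K`. The homotopy inverse comes from a retraction `X × I → X × {0} ∪ A × I`: when the track of
`δ 0` ends in `A` at level `μ ≥ 1/2`, the path running back along that track and then along `δ` is a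
point of `F`, which is placed at height `2 - 2μ` of the cone; all other `δ` go to the apex. -/

noncomputable section

open unitInterval Set

local notation "clampI" => projIcc (0 : ℝ) 1 zero_le_one

theorem isHEquivMap_iff {X Y : Type} [TopologicalSpace X] [TopologicalSpace Y] {f : C(X, Y)} :
    IsHEquivMap f ↔ ∃ e : X ≃ₕ Y, e.toFun = f :=
  ⟨fun ⟨g, hgf, hfg⟩ => ⟨⟨f, g, hgf, hfg⟩, rfl⟩,
    fun ⟨e, he⟩ => he ▸ ⟨e.invFun, e.left_inv, e.right_inv⟩⟩

theorem IsHEquivMap.homeomorph_comp {X Y Z : Type} [TopologicalSpace X] [TopologicalSpace Y]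
    [TopologicalSpace Z] {f : C(X, Y)} (hf : IsHEquivMap f) (e : Y ≃ₜ Z) :
    IsHEquivMap ((e : C(Y, Z)).comp f) := by
  obtain ⟨h, rfl⟩ := isHEquivMap_iff.1 hf
  exact isHEquivMap_iff.2 ⟨h.trans e.toHomotopyEquiv, rfl⟩

section PolyProd

variable {m : ℕ} (K : SimplicialComplexOn m) {X Y : Fin m → Type}
  [∀ i, TopologicalSpace (X i)] [∀ i, TopologicalSpace (Y i)]
  {A : ∀ i, Set (X i)} {B : ∀ i, Set (Y i)}

def polyProdHomotopy {f g : ∀ i, C(X i, Y i)} (hf : ∀ i, MapsTo (f i) (A i) (B i))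
    (hg : ∀ i, MapsTo (g i) (A i) (B i))
    (H : ∀ i, (f i).HomotopyWith (g i) fun h => MapsTo h (A i) (B i)) :
    (polyProdMap K f hf).Homotopy (polyProdMap K g hg) where
  toFun p := ⟨fun i => H i (p.1, p.2.1 i), by
    obtain ⟨s, hs, hz⟩ := p.2.2
    exact ⟨s, hs, fun i hi => (H i).prop p.1 (hz i hi)⟩⟩
  continuous_toFun := by
    refine Continuous.subtype_mk (continuous_pi fun i => (H i).continuous.comp ?_) _
    exact continuous_fst.prodMk
      ((continuous_apply i).comp (continuous_subtype_val.comp continuous_snd))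
  map_zero_left z := Subtype.ext <| funext fun i => (H i).apply_zero _
  map_one_left z := Subtype.ext <| funext fun i => (H i).apply_one _

theorem isHEquivMap_polyProdMap {f : ∀ i, C(X i, Y i)} {g : ∀ i, C(Y i, X i)}
    (hf : ∀ i, MapsTo (f i) (A i) (B i)) (hg : ∀ i, MapsTo (g i) (B i) (A i))
    (hgf : ∀ i, ((g i).comp (f i)).HomotopicWith (.id _) fun h => MapsTo h (A i) (A i))
    (hfg : ∀ i, ((f i).comp (g i)).HomotopicWith (.id _) fun h => MapsTo h (B i) (B i)) :
    IsHEquivMap (polyProdMap K f hf) :=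
  ⟨polyProdMap K g hg,
    ⟨polyProdHomotopy K (f := fun i => (g i).comp (f i)) (g := fun i => .id (X i))
      (fun i => (hg i).comp (hf i)) (fun i => mapsTo_id (A i)) fun i => (hgf i).some⟩,
    ⟨polyProdHomotopy K (f := fun i => (f i).comp (g i)) (g := fun i => .id (Y i))
      (fun i => (hf i).comp (hg i)) (fun i => mapsTo_id (B i)) fun i => (hfg i).some⟩⟩

end PolyProd

section Paths

variable {X : Type} [TopologicalSpace X]

/-- The final segment `γ|[a, 1]` of a path, parametrised by `I`. -/
def finalSegment (γ : C(I, X)) (a : I) : C(I, X) :=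
  γ.comp ⟨fun s => σ (σ a * σ s), by fun_prop⟩

@[simp] theorem finalSegment_apply (γ : C(I, X)) (a s : I) :
    finalSegment γ a s = γ (σ (σ a * σ s)) :=
  rfl

@[simp] theorem finalSegment_zero (γ : C(I, X)) : finalSegment γ 0 = γ := by
  ext s; simp

theorem finalSegment_apply_one (γ : C(I, X)) (a : I) : finalSegment γ a 1 = γ 1 := by simp

@[fun_prop]
theorem Continuous.finalSegment {Y : Type} [TopologicalSpace Y] {γ : Y → C(I, X)} {a : Y → I}
    (hγ : Continuous γ) (ha : Continuous a) : Continuous fun y => _root_.finalSegment (γ y) (a y) :=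
  ContinuousMap.continuous_of_continuous_uncurry _ <|
    show Continuous fun p : Y × I => γ p.1 (σ (σ (a p.1) * σ p.2)) from
    continuous_eval.comp <| (hγ.comp continuous_fst).prodMk (by fun_prop)

/-- At time `e`, the reparametrisation of `I` that stays at `0` up to `(1 - e) / (2 - e)`. -/
def delay : C(I × I, I) := ⟨fun p => clampI (p.2 - (1 - p.1) * (1 - p.2)), by fun_prop⟩

@[simp] theorem delay_apply_zero (e : I) : delay (e, 0) = 0 := by
  show clampI _ = 0
  rw [projIcc_eq_zero]
  simp [e.2.2]

@[simp] theorem delay_apply_one (e : I) : delay (e, 1) = 1 := by simp [delay]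

theorem delay_zero_of_le_half {s : I} (hs : (s : ℝ) ≤ 1 / 2) : delay (0, s) = 0 := by
  show clampI _ = 0
  rw [projIcc_eq_zero]
  push_cast
  linarith

theorem delay_zero_of_two_mul_sub_one_eq {x s : I} (h : 2 * (x : ℝ) - 1 = s) :
    delay (0, x) = s := by
  show clampI _ = s
  convert projIcc_val zero_le_one s using 2
  push_cast
  linarith

@[simp] theorem delay_one (s : I) : delay (1, s) = s := by simp [delay]

abbrev PathsTo (X : Type) [TopologicalSpace X] (x0 : X) : Type := {δ : C(I, X) // δ 1 = x0}

def pathsFrom {x0 : X} (A : Set X) : Set (PathsTo X x0) := {δ | δ.1 0 ∈ A}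

end Paths

section HFiber

variable {m : ℕ} (K : SimplicialComplexOn m) {X : Fin m → Type} [∀ i, TopologicalSpace (X i)]
  {A : ∀ i, Set (X i)} (x0 : ∀ i, X i)

def polyProdPathsToHomeomorphHFiber :
    polyProd K (fun i => PathsTo (X i) (x0 i)) (fun i => pathsFrom (A i)) ≃ₜ
      HFiber (polyProdProj K X A) x0 where
  toFun δ := ⟨(⟨fun i => (δ.1 i).1 0, δ.2⟩, ContinuousMap.pi fun i => (δ.1 i).1),
    rfl, funext fun i => (δ.1 i).2⟩
  invFun w := ⟨fun i => ⟨(ContinuousMap.eval i).comp w.1.2, congrFun w.2.2 i⟩, by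
    obtain ⟨s, hs, hz⟩ := w.1.1.2
    refine ⟨s, hs, fun i hi => ?_⟩
    show w.1.2 0 i ∈ A i
    rw [w.2.1]
    exact hz i hi⟩
  left_inv δ := rfl
  right_inv w := Subtype.ext <| Prod.ext (Subtype.ext <| funext fun i => congrFun w.2.1 i) rfl
  continuous_toFun := by
    have hδ (i : Fin m) : Continuous fun δ : polyProd K (fun i => PathsTo (X i) (x0 i))
        (fun i => pathsFrom (A i)) => (δ.1 i).1 :=
      continuous_subtype_val.comp ((continuous_apply i).comp continuous_subtype_val)
    refine Continuous.subtype_mk (Continuous.prodMk ?_ ?_) _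
    · exact Continuous.subtype_mk (continuous_pi fun i => (continuous_eval_const 0).comp (hδ i)) _
    · refine ContinuousMap.continuous_of_continuous_uncurry _ (continuous_pi fun i => ?_)
      exact continuous_eval.comp (((hδ i).comp continuous_fst).prodMk continuous_snd)
  continuous_invFun := by
    refine Continuous.subtype_mk (continuous_pi fun i => Continuous.subtype_mk ?_ _) _
    exact (ContinuousMap.continuous_postcomp _).comp
      (continuous_snd.comp continuous_subtype_val)

theorem isHomotopyFibration_of_isHEquivMap_polyProdMap_pathsTo {C : Fin m → Type}
    [∀ i, TopologicalSpace (C i)] {D : ∀ i, Set (C i)}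
    {j : ∀ i, C(C i, X i)} (hj : ∀ i, MapsTo (j i) (D i) (A i))
    {c : ∀ i, C(C i, PathsTo (X i) (x0 i))} (hc : ∀ i, MapsTo (c i) (D i) (pathsFrom (A i)))
    (hcj : ∀ i y, (c i y).1 0 = j i y) (h : IsHEquivMap (polyProdMap K c hc)) :
    IsHomotopyFibration (polyProdMap K j hj) (polyProdProj K X A) := by
  let H : ((polyProdProj K X A).comp (polyProdMap K j hj)).Homotopy (.const _ x0) :=
    { toFun := fun p i => (c i (p.2.1 i)).1 p.1
      continuous_toFun := continuous_pi fun i => continuous_eval.comp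
        ((continuous_subtype_val.comp ((c i).continuous.comp ((continuous_apply i).comp
          (continuous_subtype_val.comp continuous_snd)))).prodMk continuous_fst)
      map_zero_left := fun z => funext fun i => hcj i (z.1 i)
      map_one_left := fun z => funext fun i => (c i (z.1 i)).2 }
  refine ⟨x0, H, ?_⟩
  convert h.homeomorph_comp (polyProdPathsToHomeomorphHFiber K x0)
  ext z : 1
  exact Subtype.ext <| Prod.ext (Subtype.ext <| funext fun i => (hcj i (z.1 i)).symm) rfl

end HFiber

namespace TopCone

variable {F Z : Type} [TopologicalSpace F] [TopologicalSpace Z]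

def mk (w : F) (t : I) : TopCone F := Quot.mk _ (w, t)

theorem mk_one (w w' : F) : mk w 1 = mk w' 1 := Quot.sound ⟨rfl, rfl⟩

@[fun_prop]
theorem _root_.Continuous.topConeMk {Y : Type} [TopologicalSpace Y] {f : Y → F} {g : Y → I}
    (hf : Continuous f) (hg : Continuous g) : Continuous fun y => mk (f y) (g y) :=
  continuous_quot_mk.comp (hf.prodMk hg)

theorem coneIncl_apply (w : F) : coneIncl F w = mk w 0 := rfl

@[elab_as_elim]
theorem ind {P : TopCone F → Prop} (h : ∀ w t, P (mk w t)) (x : TopCone F) : P x :=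
  Quot.ind (fun a => h a.1 a.2) x

def lift (f : C(F × I, Z)) (hf : ∀ w w', f (w, 1) = f (w', 1)) : C(TopCone F, Z) :=
  ⟨Quot.lift f fun a b h => by
      obtain ⟨a, s⟩ := a
      obtain ⟨b, t⟩ := b
      obtain ⟨rfl, rfl⟩ := h
      exact hf a b,
    continuous_quot_lift _ f.continuous⟩

/-- Continuity holds since `I` is locally compact, so that `C(TopCone F, C(I, Z))` is
`C(TopCone F × I, Z)`. -/
def liftHomotopy (f : C(I × (F × I), Z)) (hf : ∀ u w w', f (u, (w, 1)) = f (u, (w', 1))) :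
    C(I × TopCone F, Z) :=
  (lift (f.comp .prodSwap).curry fun w w' => ContinuousMap.ext fun u => hf u w w').uncurry.comp
    .prodSwap

@[simp] theorem liftHomotopy_mk (f : C(I × (F × I), Z)) (hf) (u : I) (w : F) (t : I) :
    liftHomotopy f hf (u, mk w t) = f (u, (w, t)) :=
  rfl

/-- The contraction of the cone onto its apex, `t ↦ t + v (1 - t)` at time `v`. -/
def squeeze : C(I × TopCone F, TopCone F) :=
  liftHomotopy ⟨fun p => mk p.2.1 (σ (σ p.2.2 * σ p.1)), by fun_prop⟩ fun u w w' => by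
    simp [mk_one w w']

@[simp] theorem squeeze_mk (v : I) (w : F) (t : I) :
    squeeze (v, mk w t) = mk w (σ (σ t * σ v)) :=
  rfl

@[simp] theorem squeeze_zero (x : TopCone F) : squeeze (0, x) = x := by
  induction x using ind with
  | h w t => simp

theorem squeeze_one (x : TopCone F) (w : F) : squeeze (1, x) = mk w 1 := by
  induction x using ind with
  | h w' t => simpa using mk_one w' w

theorem homotopicWith_id_of_fixes_base {ψ : C(TopCone F, TopCone F)}
    (hψ : ∀ w, ψ (coneIncl F w) = coneIncl F w) :
    ψ.HomotopicWith (.id _) fun h => MapsTo h (range (coneIncl F)) (range (coneIncl F)) := by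
  have hψ' : ∀ w, ψ (mk w 0) = mk w 0 := hψ
  -- first push `ψ` towards the apex, then pull its argument back to the base
  let Λ : C(I × TopCone F, TopCone F) := liftHomotopy
    ⟨fun p => squeeze (p.2.2 * clampI (2 * p.1), ψ (mk p.2.1 (p.2.2 * clampI (2 - 2 * p.1)))),
      squeeze.continuous.comp (by fun_prop)⟩
    fun u w w' => by
      have : clampI (2 * u) = 1 ∨ clampI (2 - 2 * u) = 1 := by
        simp only [projIcc_eq_one]
        by_contra! h
        linarith
      rcases this with h | h <;> simp only [ContinuousMap.coe_mk, one_mul, h]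
      · rw [squeeze_one _ w, squeeze_one _ w]
      · rw [mk_one w w']
  have h2 : clampI 2 = 1 := projIcc_eq_one.2 one_le_two
  refine ⟨{ toContinuousMap := Λ, map_zero_left := ?_, map_one_left := ?_, prop' := ?_ }⟩
  · intro x
    induction x using ind with
    | h w t => simp [Λ, h2]
  · intro x
    induction x using ind with
    | h w t => simp [Λ, h2, hψ']
  · rintro u _ ⟨w, rfl⟩
    exact ⟨w, by simp [Λ, coneIncl_apply, hψ']⟩

theorem exists_homotopicWith_fixes_base {φ : C(TopCone F, TopCone F)} {ρ : C(F, F)}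
    (hφ : ∀ w, φ (coneIncl F w) = coneIncl F (ρ w)) (H : ρ.Homotopy (.id F)) :
    ∃ ψ : C(TopCone F, TopCone F), (∀ w, ψ (coneIncl F w) = coneIncl F w) ∧
      φ.HomotopicWith ψ fun h => MapsTo h (range (coneIncl F)) (range (coneIncl F)) := by
  have hφ' : ∀ w, φ (mk w 0) = mk (ρ w) 0 := hφ
  -- `φ` on `F × [0, 1]`, continued by the homotopy `H` on the collar `F × [-1, 0]`
  let E : C(F × ℝ, TopCone F) :=
    ⟨fun q => if 0 ≤ q.2 then φ (mk q.1 (clampI q.2)) else mk (H (clampI (-q.2), q.1)) 0, by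
      refine Continuous.if_le (by fun_prop) (by fun_prop) continuous_const continuous_snd ?_
      rintro ⟨w, s⟩ rfl
      simp [hφ']⟩
  -- at time `u`, `F × [0, 1]` is rescaled onto `F × [-u, 1]`
  let Φ : C(I × TopCone F, TopCone F) := liftHomotopy
    ⟨fun p => E (p.2.1, (1 + p.1) * p.2.2 - p.1), by fun_prop⟩ fun u w w' => by
      simp [E, mk_one w w']
  refine ⟨Φ.curry 1, fun w => ?_,
    ⟨{ toContinuousMap := Φ
       map_zero_left := ?_
       map_one_left := fun _ => rfl
       prop' := ?_ }⟩⟩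
  · simp [Φ, E, coneIncl_apply]
  · intro x
    induction x using ind with
    | h w t => simp [Φ, E, t.2.1]
  · rintro u _ ⟨w, rfl⟩
    rcases eq_or_lt_of_le u.2.1 with hu | hu
    · simp [Φ, E, coneIncl_apply, ← hu, hφ']
    · simp [Φ, E, coneIncl_apply, hu.not_ge]

theorem homotopicWith_id_of_base_homotopic {φ : C(TopCone F, TopCone F)} {ρ : C(F, F)}
    (hφ : ∀ w, φ (coneIncl F w) = coneIncl F (ρ w)) (hρ : ρ.Homotopic (.id F)) :
    φ.HomotopicWith (.id _) fun h => MapsTo h (range (coneIncl F)) (range (coneIncl F)) :=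
  let ⟨_, hψ, hφψ⟩ := exists_homotopicWith_fixes_base hφ hρ.some
  hφψ.trans (homotopicWith_id_of_fixes_base hψ)

end TopCone

/-- The data `(track, level)` of a retraction `X × I → X × {0} ∪ A × I`. -/
structure CylinderRetraction {X : Type} [TopologicalSpace X] (A : Set X) where
  track : C(X × I, X)
  level : C(X × I, I)
  track_zero : ∀ x, track (x, 0) = x
  track_of_mem : ∀ x t, x ∈ A → track (x, t) = x
  level_of_mem : ∀ x t, x ∈ A → level (x, t) = t
  track_mem : ∀ p, level p ≠ 0 → track p ∈ A

theorem IsNDRPair.nonempty_cylinderRetraction {X : Type} [TopologicalSpace X] {A : Set X}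
    (h : IsNDRPair A) : Nonempty (CylinderRetraction A) := by
  let S : Set (X × I) := {p | p.2 = 0 ∨ p.1 ∈ A}
  obtain ⟨H, H0, HA⟩ := h S inferInstance ⟨fun x => ⟨(x, 0), .inl rfl⟩, by fun_prop⟩
    ⟨fun p => ⟨(p.2.1, p.1), .inr p.2.2⟩, by fun_prop⟩ fun a => rfl
  refine ⟨⟨⟨fun p => (H (p.2, p.1)).1.1, by fun_prop⟩, ⟨fun p => (H (p.2, p.1)).1.2, by fun_prop⟩,
    fun x => ?_, fun x t hx => ?_, fun x t hx => ?_, fun p hp => ?_⟩⟩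
  · simp [H0]
  · exact congrArg (·.1.1) (HA t ⟨x, hx⟩)
  · exact congrArg (·.1.2) (HA t ⟨x, hx⟩)
  · exact (H (p.2, p.1)).2.resolve_left hp

section Fiber

variable {X : Type} [TopologicalSpace X] {A : Set X} {x0 : X}

namespace HFiber

def ofPath (γ : C(I, X)) (h0 : γ 0 ∈ A) (h1 : γ 1 = x0) : HFiber (inclCM A) x0 :=
  ⟨(⟨γ 0, h0⟩, γ), rfl, h1⟩

def basepoint (hx0 : x0 ∈ A) : HFiber (inclCM A) x0 := ⟨(⟨x0, hx0⟩, .const I x0), rfl, rfl⟩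

@[simp] theorem basepoint_path (hx0 : x0 ∈ A) : (basepoint hx0).1.2 = .const I x0 := rfl

theorem path_zero_mem (w : HFiber (inclCM A) x0) : w.1.2 0 ∈ A := w.2.1 ▸ w.1.1.2

theorem ext_path {w w' : HFiber (inclCM A) x0} (h : w.1.2 = w'.1.2) : w = w' :=
  Subtype.ext <| Prod.ext (Subtype.ext <| w.2.1.symm.trans <| (congrArg (· 0) h).trans w'.2.1) h

@[fun_prop]
theorem continuous_ofPath {Y : Type} [TopologicalSpace Y] {γ : Y → C(I, X)} (hγ : Continuous γ)
    (h0 : ∀ y, γ y 0 ∈ A) (h1 : ∀ y, γ y 1 = x0) : Continuous fun y => ofPath (γ y) (h0 y) (h1 y) :=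
  Continuous.subtype_mk (Continuous.prodMk (Continuous.subtype_mk (by fun_prop) _) hγ) _

def delayHomotopy : C(I × HFiber (inclCM A) x0, HFiber (inclCM A) x0) :=
  ⟨fun p => ofPath (p.2.1.2.comp (delay.curry p.1)) (by simpa using p.2.path_zero_mem)
    (by simpa using p.2.2.2), by
    have hγ : Continuous fun p : I × HFiber (inclCM A) x0 => p.2.1.2 :=
      continuous_snd.comp (continuous_subtype_val.comp continuous_snd)
    exact continuous_ofPath (ContinuousMap.continuous_comp'.comp
      ((delay.curry.continuous.comp continuous_fst).prodMk hγ)) _ _⟩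

theorem delayHomotopy_zero_homotopic :
    (delayHomotopy.curry 0 : C(HFiber (inclCM A) x0, _)).Homotopic (.id _) :=
  ⟨{ toContinuousMap := delayHomotopy
     map_zero_left := fun _ => rfl
     map_one_left := fun w => ext_path <| ContinuousMap.ext fun s =>
       show w.1.2 (delay (1, s)) = w.1.2 s by rw [delay_one] }⟩

end HFiber

def coneToPaths : C(TopCone (HFiber (inclCM A) x0), PathsTo X x0) :=
  TopCone.lift ⟨fun p => ⟨finalSegment p.1.1.2 p.2, (finalSegment_apply_one _ _).trans p.1.2.2⟩,
    Continuous.subtype_mk (by fun_prop) _⟩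
    fun w w' => Subtype.ext <| ContinuousMap.ext fun s =>
      show finalSegment w.1.2 1 s = finalSegment w'.1.2 1 s by simp [w.2.2, w'.2.2]

theorem coneToPaths_mk (w : HFiber (inclCM A) x0) (θ : I) :
    (coneToPaths (TopCone.mk w θ)).1 = finalSegment w.1.2 θ :=
  rfl

theorem coneToPaths_apply_zero (y : TopCone (HFiber (inclCM A) x0)) :
    (coneToPaths y).1 0 = coneFibEval A x0 y := by
  induction y using TopCone.ind with
  | h w θ => exact congrArg w.1.2 (by simp)

theorem mapsTo_coneToPaths :
    MapsTo coneToPaths (range (coneIncl (HFiber (inclCM A) x0))) (pathsFrom A) := by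
  rintro _ ⟨w, rfl⟩
  simpa [pathsFrom, TopCone.coneIncl_apply, coneToPaths_mk] using w.path_zero_mem

end Fiber

namespace CylinderRetraction

variable {X : Type} [TopologicalSpace X] {A : Set X} {x0 : X} (r : CylinderRetraction A)

/-- `r.prepend (v, γ)` runs back along the track of `γ 0` from time `v` to `0`, then along `γ`. -/
def prepend : C(I × C(I, X), C(I, X)) := ContinuousMap.curry
  ⟨fun p => if (p.2 : ℝ) ≤ 1 / 2 then r.track (p.1.2 0, p.1.1 * clampI (1 - 2 * p.2))
      else p.1.2 (delay (0, p.2)), by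
    refine Continuous.if_le (by fun_prop) (by fun_prop) (by fun_prop) continuous_const ?_
    rintro ⟨⟨v, γ⟩, s⟩ (hs : (s : ℝ) = 1 / 2)
    simp [delay_zero_of_le_half hs.le, hs, r.track_zero]⟩

theorem prepend_apply_of_le {v : I} {γ : C(I, X)} {s : I} (hs : (s : ℝ) ≤ 1 / 2) :
    r.prepend (v, γ) s = r.track (γ 0, v * clampI (1 - 2 * s)) :=
  if_pos hs

theorem prepend_apply_of_ge {v : I} {γ : C(I, X)} {s : I} (hs : 1 / 2 ≤ (s : ℝ)) :
    r.prepend (v, γ) s = γ (delay (0, s)) := by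
  rcases hs.eq_or_lt with hs | hs
  · rw [prepend_apply_of_le r hs.ge]
    simp [delay_zero_of_le_half hs.symm.le, ← hs, r.track_zero]
  · exact if_neg hs.not_ge

@[simp] theorem prepend_apply_zero (v : I) (γ : C(I, X)) :
    r.prepend (v, γ) 0 = r.track (γ 0, v) := by
  rw [prepend_apply_of_le r (by simp)]
  simp

@[simp] theorem prepend_apply_one (v : I) (γ : C(I, X)) : r.prepend (v, γ) 1 = γ 1 := by
  rw [prepend_apply_of_ge r (by norm_num)]
  simp

theorem prepend_of_mem (v : I) {γ : C(I, X)} (h : γ 0 ∈ A) :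
    r.prepend (v, γ) = γ.comp (delay.curry 0) := by
  ext s
  rcases le_total (s : ℝ) (1 / 2) with hs | hs
  · rw [prepend_apply_of_le r hs, r.track_of_mem _ _ h]
    simp [delay_zero_of_le_half hs]
  · exact prepend_apply_of_ge r hs

theorem finalSegment_prepend_of_eq_half (v : I) (γ : C(I, X)) {a : I} (ha : (a : ℝ) = 1 / 2) :
    finalSegment (r.prepend (v, γ)) a = γ := by
  ext s
  have hs : (σ (σ a * σ s) : ℝ) = (1 + s) / 2 := by
    simp [ha]
    ring
  rw [finalSegment_apply, r.prepend_apply_of_ge (by rw [hs]; linarith [s.2.1])]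
  exact congrArg γ (delay_zero_of_two_mul_sub_one_eq (by rw [hs]; ring))

theorem prepend_apply_zero_mem {v : I} {γ : C(I, X)} (h : r.level (γ 0, v) ≠ 0) :
    r.prepend (v, γ) 0 ∈ A := by
  simpa using r.track_mem _ h

def pathsToCone (hx0 : x0 ∈ A) : C(PathsTo X x0, TopCone (HFiber (inclCM A) x0)) where
  toFun δ := if h : 1 / 2 ≤ (r.level (δ.1 0, 1) : ℝ) then
      TopCone.mk (HFiber.ofPath (r.prepend (1, δ.1))
        (r.prepend_apply_zero_mem fun h0 => by norm_num [h0] at h) (by simpa using δ.2))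
        (clampI (2 - 2 * r.level (δ.1 0, 1)))
    else TopCone.mk (HFiber.basepoint hx0) 1
  continuous_toFun := by
    have hμ : Continuous fun δ : PathsTo X x0 => (r.level (δ.1 0, 1) : ℝ) := by fun_prop
    have hcover : {δ : PathsTo X x0 | 1 / 2 ≤ (r.level (δ.1 0, 1) : ℝ)} ∪
        {δ | (r.level (δ.1 0, 1) : ℝ) ≤ 1 / 2} = univ := by
      ext δ
      simp [le_total]
    rw [← continuousOn_univ, ← hcover]
    refine ContinuousOn.union_of_isClosed ?_ ?_ (isClosed_le continuous_const hμ)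
      (isClosed_le hμ continuous_const)
    · rw [continuousOn_iff_continuous_domRestrict]
      refine (continuous_congr fun δ => (dif_pos δ.2).symm).1 ?_
      fun_prop
    · refine (continuousOn_const (c := TopCone.mk (HFiber.basepoint hx0) 1)).congr
        fun δ (hδ : (r.level (δ.1 0, 1) : ℝ) ≤ 1 / 2) => ?_
      split_ifs with h
      · have h1 : clampI (2 - 2 * (r.level (δ.1 0, 1) : ℝ)) = 1 := by
          rw [projIcc_eq_one]
          linarith
        rw [h1]
        exact TopCone.mk_one _ _
      · rfl

theorem pathsToCone_of_le (hx0 : x0 ∈ A) {δ : PathsTo X x0}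
    (h : 1 / 2 ≤ (r.level (δ.1 0, 1) : ℝ)) :
    r.pathsToCone hx0 δ = TopCone.mk (HFiber.ofPath (r.prepend (1, δ.1))
      (r.prepend_apply_zero_mem fun h0 => by norm_num [h0] at h) (by simpa using δ.2))
      (clampI (2 - 2 * r.level (δ.1 0, 1))) :=
  dif_pos h

theorem pathsToCone_of_lt (hx0 : x0 ∈ A) {δ : PathsTo X x0}
    (h : (r.level (δ.1 0, 1) : ℝ) < 1 / 2) :
    r.pathsToCone hx0 δ = TopCone.mk (HFiber.basepoint hx0) 1 :=
  dif_neg h.not_ge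

theorem pathsToCone_of_mem (hx0 : x0 ∈ A) {δ : PathsTo X x0} (h : δ.1 0 ∈ A) :
    r.pathsToCone hx0 δ = TopCone.mk (HFiber.ofPath (δ.1.comp (delay.curry 0))
      (by simpa using h) (by simpa using δ.2)) 0 := by
  have hμ : r.level (δ.1 0, 1) = 1 := r.level_of_mem _ _ h
  rw [r.pathsToCone_of_le hx0 (by norm_num [hμ])]
  congr 1
  · exact HFiber.ext_path (r.prepend_of_mem 1 h)
  · simp [hμ]

theorem mapsTo_pathsToCone (hx0 : x0 ∈ A) :
    MapsTo (r.pathsToCone hx0) (pathsFrom A) (range (coneIncl (HFiber (inclCM A) x0))) :=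
  fun _ h => ⟨_, (r.pathsToCone_of_mem hx0 h).symm⟩

theorem pathsToCone_comp_coneToPaths_homotopicWith (hx0 : x0 ∈ A) :
    ((r.pathsToCone hx0).comp coneToPaths).HomotopicWith (.id _) fun h =>
      MapsTo h (range (coneIncl (HFiber (inclCM A) x0))) (range (coneIncl _)) := by
  refine TopCone.homotopicWith_id_of_base_homotopic (fun w => ?_)
    HFiber.delayHomotopy_zero_homotopic
  have hw : coneToPaths (coneIncl _ w) = ⟨w.1.2, w.2.2⟩ := Subtype.ext (finalSegment_zero _)
  rw [ContinuousMap.comp_apply, hw, r.pathsToCone_of_mem hx0 (δ := ⟨w.1.2, w.2.2⟩) w.path_zero_mem]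
  rfl

theorem coneToPaths_comp_pathsToCone_homotopicWith (hx0 : x0 ∈ A) :
    (coneToPaths.comp (r.pathsToCone hx0)).HomotopicWith (.id _) fun h =>
      MapsTo h (pathsFrom A) (pathsFrom A) := by
  let μ : C(PathsTo X x0, ℝ) := ⟨fun δ => r.level (δ.1 0, 1), by fun_prop⟩
  -- `a` moves from the cone height `2 - 2μ` used by `pathsToCone` to `1/2`, where the final
  -- segment of the detour is `δ` itself
  let a : C(I × PathsTo X x0, I) :=
    ⟨fun p => clampI ((1 - p.1) * (2 - 2 * μ p.2) + p.1 / 2), by fun_prop⟩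
  have hD (p : I × PathsTo X x0) : finalSegment (r.prepend (σ p.1, p.2.1)) (a p) 1 = x0 := by
    simp [p.2.2]
  refine ⟨{ toFun := fun p => ⟨_, hD p⟩
            continuous_toFun := Continuous.subtype_mk (by fun_prop) hD
            map_zero_left := fun δ => ?_
            map_one_left := fun δ => ?_
            prop' := fun u δ hδ => ?_ }⟩
  · apply Subtype.ext
    show finalSegment (r.prepend (σ 0, δ.1)) (a (0, δ)) = (coneToPaths (r.pathsToCone hx0 δ)).1
    have ha : a (0, δ) = clampI (2 - 2 * μ δ) := by simp [a]
    rw [symm_zero, ha]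
    rcases le_or_gt (1 / 2) (μ δ) with h | h
    · rw [r.pathsToCone_of_le hx0 h]
      rfl
    · have h1 : clampI (2 - 2 * μ δ) = 1 := by
        rw [projIcc_eq_one]
        linarith
      rw [r.pathsToCone_of_lt hx0 h, coneToPaths_mk, h1]
      ext s
      simp [δ.2]
  · refine Subtype.ext <| r.finalSegment_prepend_of_eq_half _ _ ?_
    simp only [a, ContinuousMap.coe_mk, Set.Icc.coe_one, sub_self, zero_mul, zero_add]
    exact congrArg Subtype.val (projIcc_of_mem _ ⟨by norm_num, by norm_num⟩)
  · have hμ : μ δ = 1 := by simp [μ, r.level_of_mem _ _ hδ]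
    have ha : (a (u, δ) : ℝ) = u / 2 := by
      simp only [a, ContinuousMap.coe_mk, hμ, mul_one, sub_self, mul_zero, zero_add]
      exact congrArg Subtype.val (projIcc_of_mem _ ⟨by linarith [u.2.1], by linarith [u.2.2]⟩)
    show finalSegment (r.prepend (σ u, δ.1)) (a (u, δ)) 0 ∈ A
    rw [r.prepend_of_mem _ hδ]
    have hu : (a (u, δ) : ℝ) ≤ 1 / 2 := by
      rw [ha]
      linarith [u.2.2]
    simpa [delay_zero_of_le_half hu, pathsFrom] using hδ

end CylinderRetraction

end

/-- Proposition 3.3 of the paper: the homotopy fibration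
`Z_K(CF, F) → Z_K(X, A) → ∏ᵢ Xᵢ`. -/
theorem polyProd_fibration {m : ℕ} (K : SimplicialComplexOn m) (X : Fin m → Type)
    [∀ i, TopologicalSpace (X i)] (A : ∀ i, Set (X i)) (x0 : ∀ i, X i)
    (hx0 : ∀ i, x0 i ∈ A i) (hNDR : ∀ i, IsNDRPair (A i)) :
    IsHomotopyFibration
      (polyProdMap K (fun i => coneFibEval (A i) (x0 i))
        (fun i => coneFibEval_mapsTo (A i) (x0 i)))
      (polyProdProj K X A) := by
  have r : ∀ i, CylinderRetraction (A i) := fun i => (hNDR i).nonempty_cylinderRetraction.some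
  refine isHomotopyFibration_of_isHEquivMap_polyProdMap_pathsTo K x0 _
    (fun _ => mapsTo_coneToPaths) (fun _ => coneToPaths_apply_zero) ?_
  exact isHEquivMap_polyProdMap K _ (fun i => (r i).mapsTo_pathsToCone (hx0 i))
    (fun i => (r i).pathsToCone_comp_coneToPaths_homotopicWith (hx0 i))
    (fun i => (r i).coneToPaths_comp_pathsToCone_homotopicWith (hx0 i))
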